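/- The braided ASEP jump rates satisfy the recurrence: for all integers m, k2, all integers k1 ≥ 1, and all integers 0 ≤ l2 ≤ k1, p_m(k1,k2;l2) = q^{2(m−k2−k1+l2)} · p_m(k1−1, k2; l2−1) + (1 − q^{2(m−k2−k1+l2+1)}) · p_m(k1−1, k2; l2). -/

import Mathlib

/-!
With `c = m − k2 − k1 + l2`, the rate factors as
`[k1, l2]_{q²} · (q^{2(m−k2)}; q^{−2})_{k1−l2} · q^{2c·l2}`. Splitting the last factor off the
Pochhammer symbol of length `k1 − l2` produces `1 − q^{2(c+1)}`, and after collecting powers of `q`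
the recurrence becomes the `q`-Pascal rule `[n+1, l] = [n, l−1] + q^{2l} [n, l]`. Extending the
Gaussian binomial by zero to all integers `l` makes both the factorisation and the Pascal rule hold
with no boundary cases, so the recurrence holds for every integer `l2`.
-/

open BigOperators Finset

noncomputable section

namespace Stmt10

/-- The `q²`-deformed integer `[n]_{q²} = (1 − q^{2n})/(1 − q²)`. -/
def qInt (q : ℝ) (n : ℕ) : ℝ := (1 - q ^ (2 * n)) / (1 - q ^ 2)

/-- The `q²`-deformed factorial `[n]_{q²}! = [1]_{q²} ⋯ [n]_{q²}`, with `[0]_{q²}! = 1`. -/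
def qFact (q : ℝ) : ℕ → ℝ
  | 0 => 1
  | n + 1 => qFact q n * qInt q (n + 1)

/-- The `q²`-deformed binomial coefficient, equal to `0` when `k > n`. -/
def qBinom (q : ℝ) (n k : ℕ) : ℝ :=
  if k ≤ n then qFact q n / (qFact q k * qFact q (n - k)) else 0

/-- The Pochhammer symbol `(a;p)_n = ∏_{i=0}^{n−1} (1 − a pⁱ)`, with `(a;p)_0 = 1`. -/
def qPoch (a p : ℝ) (n : ℕ) : ℝ := ∏ i ∈ Finset.range n, (1 - a * p ^ i)

/-- The braided ASEP jump rate
`p_m(k1,k2;l2) = binom_{q²}(k1,l2) (q^{2(m−k2)};q^{−2})_{k1−l2} q^{2(m−k2−k1+l2)l2}`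
when `0 ≤ l2 ≤ k1`, and `0` otherwise.  Here `m, k2, l2` range over the integers
and `k1` over the naturals. -/
def pRate (q : ℝ) (m k2 : ℤ) (k1 : ℕ) (l2 : ℤ) : ℝ :=
  if 0 ≤ l2 ∧ l2 ≤ (k1 : ℤ) then
    qBinom q k1 l2.toNat *
      qPoch (q ^ ((2 : ℤ) * (m - k2))) (q ^ ((-2 : ℤ))) (k1 - l2.toNat) *
      q ^ ((2 : ℤ) * (m - k2 - (k1 : ℤ) + l2) * l2)
  else 0

variable {q : ℝ}

lemma qFact_succ (n : ℕ) : qFact q (n + 1) = qFact q n * qInt q (n + 1) := rfl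

lemma qInt_pos (hq : |q| < 1) {n : ℕ} (hn : n ≠ 0) : 0 < qInt q n := by
  have hq2 : q ^ 2 < 1 := (sq_lt_one_iff_abs_lt_one q).2 hq
  rw [qInt, pow_mul]
  exact div_pos (sub_pos.2 (pow_lt_one₀ (sq_nonneg q) hq2 hn)) (sub_pos.2 hq2)

lemma qFact_pos (hq : |q| < 1) (n : ℕ) : 0 < qFact q n := by
  induction n with
  | zero => exact one_pos
  | succ n ih => exact mul_pos ih (qInt_pos hq n.succ_ne_zero)

lemma qInt_add (hq : q ^ 2 ≠ 1) (a b : ℕ) :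
    qInt q (a + b) = qInt q a + q ^ (2 * a) * qInt q b := by
  have : 1 - q ^ 2 ≠ 0 := sub_ne_zero.2 hq.symm
  simp only [qInt]
  field_simp
  ring

lemma qBinom_eq_div {n k : ℕ} (h : k ≤ n) :
    qBinom q n k = qFact q n / (qFact q k * qFact q (n - k)) :=
  if_pos h

lemma qBinom_of_lt {n k : ℕ} (h : n < k) : qBinom q n k = 0 :=
  if_neg h.not_ge

lemma qBinom_zero (hq : |q| < 1) (n : ℕ) : qBinom q n 0 = 1 := by
  simp [qBinom, qFact, (qFact_pos hq n).ne']

lemma qBinom_self (hq : |q| < 1) (n : ℕ) : qBinom q n n = 1 := by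
  simp [qBinom, qFact, (qFact_pos hq n).ne']

lemma qBinom_succ_succ (hq : |q| < 1) (n k : ℕ) :
    qBinom q (n + 1) (k + 1) = qBinom q n k + q ^ (2 * (k + 1)) * qBinom q n (k + 1) := by
  rcases lt_trichotomy k n with hlt | rfl | hgt
  · obtain ⟨r, rfl⟩ := Nat.exists_eq_add_of_lt hlt
    have hsplit : qInt q (k + r + 1 + 1) = qInt q (k + 1) + q ^ (2 * (k + 1)) * qInt q (r + 1) := by
      rw [← qInt_add ((sq_lt_one_iff_abs_lt_one q).2 hq).ne]
      ring_nf
    have hF : ∀ j, qFact q j ≠ 0 := fun j => (qFact_pos hq j).ne'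
    have hI : ∀ j, qInt q (j + 1) ≠ 0 := fun j => (qInt_pos hq j.succ_ne_zero).ne'
    rw [qBinom_eq_div (by omega), qBinom_eq_div (by omega), qBinom_eq_div (by omega),
      show k + r + 1 + 1 - (k + 1) = r + 1 by omega, show k + r + 1 - k = r + 1 by omega,
      show k + r + 1 - (k + 1) = r by omega, qFact_succ (k + r + 1), qFact_succ k,
      qFact_succ r, hsplit]
    field_simp [hF, hI]
  · rw [qBinom_self hq, qBinom_self hq, qBinom_of_lt (Nat.lt_succ_self k)]
    ring
  · rw [qBinom_of_lt (by omega), qBinom_of_lt hgt, qBinom_of_lt (by omega)]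
    ring

def qBinomZ (q : ℝ) (n : ℕ) (l : ℤ) : ℝ := if 0 ≤ l then qBinom q n l.toNat else 0

lemma qBinomZ_of_lt {n : ℕ} {l : ℤ} (h : (n : ℤ) < l) : qBinomZ q n l = 0 := by
  rw [qBinomZ, if_pos (by omega), qBinom_of_lt (by omega)]

lemma qBinomZ_succ (hq : |q| < 1) (n : ℕ) (l : ℤ) :
    qBinomZ q (n + 1) l = qBinomZ q n (l - 1) + q ^ (2 * l) * qBinomZ q n l := by
  rcases lt_trichotomy l 0 with hneg | rfl | hpos
  · simp [qBinomZ, hneg.not_ge, (hneg.trans zero_lt_one).not_ge]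
  · simp [qBinomZ, qBinom_zero hq]
  · obtain ⟨k, rfl⟩ := Int.eq_succ_of_zero_lt hpos
    simp only [qBinomZ, if_pos hpos.le, add_sub_cancel_right, if_pos (Int.natCast_nonneg k),
      Int.toNat_natCast_add_one, Int.toNat_natCast]
    rw [qBinom_succ_succ hq, ← zpow_natCast]
    push_cast
    ring_nf

lemma pRate_eq (m k2 : ℤ) (k1 : ℕ) (l : ℤ) :
    pRate q m k2 k1 l = qBinomZ q k1 l * qPoch (q ^ (2 * (m - k2))) (q ^ (-2 : ℤ)) (k1 - l).toNat *
      q ^ (2 * (m - k2 - k1 + l) * l) := by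
  rw [pRate, qBinomZ]
  by_cases hl : 0 ≤ l
  · by_cases hlk : l ≤ k1
    · rw [if_pos ⟨hl, hlk⟩, if_pos hl, show k1 - l.toNat = (k1 - l).toNat by omega]
    · rw [if_neg (by omega), if_pos hl, qBinom_of_lt (by omega)]
      ring
  · rw [if_neg (by omega), if_neg hl]
    ring

lemma qPoch_zpow_succ (hq : q ≠ 0) (s : ℤ) (j : ℕ) :
    qPoch (q ^ (2 * s)) (q ^ (-2 : ℤ)) (j + 1) =
      qPoch (q ^ (2 * s)) (q ^ (-2 : ℤ)) j * (1 - q ^ (2 * (s - j))) := by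
  rw [qPoch, Finset.prod_range_succ, ← qPoch, ← zpow_natCast, ← zpow_mul, ← zpow_add₀ hq]
  ring_nf

lemma qBinomZ_mul_qPoch_succ (hq : q ≠ 0) (s : ℤ) (n : ℕ) (l : ℤ) :
    qBinomZ q n l * qPoch (q ^ (2 * s)) (q ^ (-2 : ℤ)) (n + 1 - l).toNat =
      qBinomZ q n l * (qPoch (q ^ (2 * s)) (q ^ (-2 : ℤ)) (n - l).toNat *
        (1 - q ^ (2 * (s - n + l)))) := by
  by_cases hl : l ≤ n
  · rw [show (n + 1 - l).toNat = (n - l).toNat + 1 by omega, qPoch_zpow_succ hq,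
      Int.toNat_of_nonneg (by omega), sub_sub_eq_add_sub, add_sub_right_comm]
  · simp [qBinomZ_of_lt (not_le.1 hl)]

theorem braided_rate_recurrence_general (q : ℝ) (hq0 : 0 < q) (hq1 : q < 1)
    (m k2 : ℤ) (k1 : ℕ) (hk1 : 1 ≤ k1) (l2 : ℤ) :
    pRate q m k2 k1 l2 =
      q ^ ((2 : ℤ) * (m - k2 - (k1 : ℤ) + l2)) * pRate q m k2 (k1 - 1) (l2 - 1) +
        (1 - q ^ ((2 : ℤ) * (m - k2 - (k1 : ℤ) + l2 + 1))) * pRate q m k2 (k1 - 1) l2 := by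
  obtain ⟨n, rfl⟩ := Nat.exists_eq_add_of_le' hk1
  have hq : q ≠ 0 := hq0.ne'
  obtain ⟨c, hc⟩ : ∃ c : ℤ, m - k2 - n + l2 = c + 1 := ⟨_, (sub_add_cancel _ 1).symm⟩
  have hpoch := qBinomZ_mul_qPoch_succ hq (m - k2) n l2
  rw [hc] at hpoch
  have hpow₁ : q ^ (2 * c) * q ^ (2 * c * (l2 - 1)) = q ^ (2 * c * l2) := by
    rw [← zpow_add₀ hq]; ring_nf
  have hpow₂ : q ^ (2 * (c + 1) * l2) = q ^ (2 * l2) * q ^ (2 * c * l2) := by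
    rw [← zpow_add₀ hq]; ring_nf
  rw [Nat.add_sub_cancel, pRate_eq, pRate_eq, pRate_eq, qBinomZ_succ (abs_lt.2 ⟨by linarith, hq1⟩),
    show ((n + 1 : ℕ) : ℤ) - l2 = n + 1 - l2 by push_cast; ring,
    show (n : ℤ) - (l2 - 1) = n + 1 - l2 by ring,
    show m - k2 - ((n + 1 : ℕ) : ℤ) + l2 = c by push_cast; omega,
    show m - k2 - n + (l2 - 1) = c by omega, hc, hpow₂, ← hpow₁]
  linear_combination (q ^ (2 * l2) * (q ^ (2 * c) * q ^ (2 * c * (l2 - 1)))) * hpoch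

/-- **Recurrence for the braided ASEP jump rates** (Lemma 3.3 in the paper):
for all integers `m, k2`, all `k1 ≥ 1` and all `0 ≤ l2 ≤ k1`,
`p_m(k1,k2;l2) = q^{2(m−k2−k1+l2)} p_m(k1−1,k2;l2−1) + (1 − q^{2(m−k2−k1+l2+1)}) p_m(k1−1,k2;l2)`. -/
theorem braided_rate_recurrence (q : ℝ) (hq0 : 0 < q) (hq1 : q < 1)
    (m k2 : ℤ) (k1 : ℕ) (hk1 : 1 ≤ k1) (l2 : ℤ) (hl0 : 0 ≤ l2) (hl1 : l2 ≤ (k1 : ℤ)) :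
    pRate q m k2 k1 l2 =
      q ^ ((2 : ℤ) * (m - k2 - (k1 : ℤ) + l2)) * pRate q m k2 (k1 - 1) (l2 - 1) +
        (1 - q ^ ((2 : ℤ) * (m - k2 - (k1 : ℤ) + l2 + 1))) * pRate q m k2 (k1 - 1) l2 :=
  braided_rate_recurrence_general q hq0 hq1 m k2 k1 hk1 l2

end Stmt10

end
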